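/- There exists a binary linear [62, 6, 30] self-orthogonal code: an F_2-subspace C of F_2^62 with dim C = 6, such that x·y = 0 for all x, y ∈ C, every nonzero codeword of C has Hamming weight at least 30, and some codeword of C has Hamming weight exactly 30. -/
import Mathlib

def Mcode : Matrix (Fin 6) (Fin 62) (ZMod 2) :=
  fun i j => if Nat.testBit (if (j : ℕ) < 6 then 5 + (j : ℕ) / 2 else (j : ℕ) + 2) (i : ℕ) then 1 else 0

set_option maxRecDepth 10000 in
lemma key_orth : ∀ i k : Fin 6, ∑ j : Fin 62, Mcode i j * Mcode k j = 0 := by decide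

set_option maxRecDepth 100000 in
lemma key_wt : ∀ c : Fin 6 → ZMod 2,
    Mcode.vecMul c ≠ 0 → 30 ≤ hammingNorm (Mcode.vecMul c) := by decide

set_option maxRecDepth 100000 in
lemma key_inj : ∀ c : Fin 6 → ZMod 2, Mcode.vecMul c = 0 → c = 0 := by decide

/-- There exists a binary linear [62, 6, 30] self-orthogonal code. -/
theorem stmt_17 :
    ∃ C : Submodule (ZMod 2) (Fin 62 → ZMod 2),
      Module.finrank (ZMod 2) C = 6 ∧
      (∀ x ∈ C, ∀ y ∈ C, ∑ j, x j * y j = (0 : ZMod 2)) ∧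
      (∀ x ∈ C, x ≠ 0 → 30 ≤ hammingNorm x) ∧
      (∃ x ∈ C, hammingNorm x = 30) := by
  refine ⟨LinearMap.range Mcode.vecMulLinear, ?_, ?_, ?_, ?_⟩
  · have hinj : Function.Injective Mcode.vecMulLinear := by
      rw [injective_iff_map_eq_zero]
      intro c hc
      exact key_inj c hc
    rw [LinearMap.finrank_range_of_inj hinj]
    simp [Module.finrank_fintype_fun_eq_card]
  · rintro x ⟨c, rfl⟩ y ⟨d, rfl⟩
    have : ∀ j, Mcode.vecMulLinear c j = ∑ i, c i * Mcode i j := fun j => rfl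
    simp only [this]
    calc ∑ j, (∑ i, c i * Mcode i j) * (∑ k, d k * Mcode k j)
        = ∑ j, ∑ i, ∑ k, (c i * d k) * (Mcode i j * Mcode k j) := by
          refine Finset.sum_congr rfl fun j _ => ?_
          rw [Finset.sum_mul_sum]
          exact Finset.sum_congr rfl fun i _ => Finset.sum_congr rfl fun k _ => by ring
      _ = ∑ i, ∑ k, (c i * d k) * ∑ j, Mcode i j * Mcode k j := by
          rw [Finset.sum_comm]
          refine Finset.sum_congr rfl fun i _ => ?_
          rw [Finset.sum_comm]
          exact Finset.sum_congr rfl fun k _ => (Finset.mul_sum _ _ _).symm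
      _ = 0 := by
          refine Finset.sum_eq_zero fun i _ => Finset.sum_eq_zero fun k _ => ?_
          rw [key_orth i k, mul_zero]
  · rintro x ⟨c, rfl⟩ hx
    exact key_wt c hx
  · refine ⟨Mcode.vecMulLinear (fun i => if i = 0 ∨ i = 2 then 1 else 0), ⟨_, rfl⟩, ?_⟩
    decide
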